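/- arXiv:math/0106148 — 2 statements merged into one kernel-verified Lean document; each statement's English description precedes it below -/
import Mathlib

section
/- Let m ≥ 1, let k_1,…,k_m, l_1,…,l_m be nonnegative integers with k_1 ≥ 1 and l_m ≥ 1, set L_0 = 0, L_i = l_1 + ⋯ + l_i and L = L_m. For a strictly decreasing tuple of positive integers n_1 > ⋯ > n_L > 0 and 1 ≤ j ≤ L, define C_{n_j}^{n_1…n_L} = ( ∏_{i=1}^m 1/n_{L_{i−1}+1}^{k_i} ) · ∏_{i ≠ j} 1/(n_i − n_j). Then for every λ ∈ ℂ that is not a positive integer and every j with 1 ≤ j ≤ L, the sum Σ_{n_1 > ⋯ > n_L > 0} | C_{n_j}^{n_1…n_L} / (n_j − λ) | over all strictly decreasing tuples of positive integers converges (the family is absolutely summable). -/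
/-- Strictly decreasing sequences of positive integers of length `L`
(encoded as functions `ℕ → ℕ` vanishing from `L` on). -/
def DecSeq (L : ℕ) : Type :=
  {n : ℕ → ℕ //
    (∀ i j : ℕ, i < j → j < L → n j < n i) ∧ (∀ i, i < L → 0 < n i) ∧ ∀ i, L ≤ i → n i = 0}

/-- `Lpart m l i = l₁ + ⋯ + l_{i-1}` (0-indexed: the sum of the `l j` for `j < i`),
i.e. the flat index of the first entry of the `i`-th block. -/
def Lpart (m : ℕ) (l : Fin m → ℕ) (i : Fin m) : ℕ :=
  ∑ j : Fin m, if j < i then l j else 0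

/-- The generating function
`f({kᵢ,lᵢ}ᵢ; λ) = Σ_{n₁ > ⋯ > n_{L_m} > 0} ∏ᵢ [ 1/n_{L_{i-1}+1}^{kᵢ} ∏_j 1/(n_j - λ) ]`. -/
noncomputable def genF (m : ℕ) (k l : Fin m → ℕ) (lam : ℂ) : ℂ :=
  ∑' n : DecSeq (∑ j, l j),
    ∏ i : Fin m,
      (1 / ((n.1 (Lpart m l i) : ℂ)) ^ k i *
        ∏ j ∈ Finset.Ico (Lpart m l i) (Lpart m l i + l i), 1 / ((n.1 j : ℂ) - lam))

open Asymptotics Filter Finset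

/-!
Write `a = n_j`; the tuple is determined by `a` and the gaps `g_i = |n_i - n_j|` (`i ≠ j`),
which, like `a`, lie in `[1, n_1]`. Since `k_1 ≥ 1` and `|1 / (n_j - λ)| = O(1 / n_j)` (as `λ` is
not a positive integer), the summand is at most a constant times `1 / (n_1 a ∏ g_i)`. With
`p = 1 / L`, each `1 / g_i ≤ n_1^p g_i^{-(1+p)}`, and the `L - 1` factors `n_1^p` together with
`1 / n_1` give `n_1^{-p} ≤ a^{-p}`. So the summand is bounded by `a^{-(1+p)} ∏ g_i^{-(1+p)}`,
a product of convergent `p`-series in independent variables.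
-/

theorem summable_prod_apply_of_nonneg {ι : Type*} [Fintype ι] {κ : ι → Type*}
    {f : ∀ i, κ i → ℝ} (hf₀ : ∀ i x, 0 ≤ f i x) (hf : ∀ i, Summable (f i)) :
    Summable fun x : ∀ i, κ i => ∏ i, f i (x i) := by
  classical
  refine summable_of_sum_le (c := ∏ i, ∑' y, f i y)
    (fun x => prod_nonneg fun i _ => hf₀ i (x i)) fun s => ?_
  calc ∑ x ∈ s, ∏ i, f i (x i)
      ≤ ∑ x ∈ Fintype.piFinset fun i => s.image (· i), ∏ i, f i (x i) :=
        sum_le_sum_of_subset_of_nonneg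
          (fun x hx => Fintype.mem_piFinset.2 fun i => mem_image_of_mem _ hx)
          fun x _ _ => prod_nonneg fun i _ => hf₀ i (x i)
    _ = ∏ i, ∑ y ∈ s.image (· i), f i y := (prod_univ_sum _ _).symm
    _ ≤ ∏ i, ∑' y, f i y :=
        prod_le_prod (fun i _ => sum_nonneg fun y _ => hf₀ i y)
          fun i _ => (hf i).sum_le_tsum _ fun y _ => hf₀ i y

theorem exists_norm_inv_natCast_sub_le_mul_inv {lam : ℂ}
    (hlam : ∀ n : ℕ, 0 < n → lam ≠ n) :
    ∃ C, ∀ n : ℕ, 0 < n → ‖((n : ℂ) - lam)⁻¹‖ ≤ C * (n : ℝ)⁻¹ := by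
  have hequiv : IsEquivalent atTop (fun n : ℕ => (n : ℂ) - lam) (fun n => (n : ℂ)) :=
    ((isLittleO_const_left (c := lam)).2 <| Or.inr <|
      tendsto_natCast_atTop_atTop.congr fun n => by simp).neg_left.congr_left fun n => by simp
  have hzero (n : ℕ) (hn : (n : ℂ) - lam = 0) : (n : ℂ) = 0 := by
    rcases n.eq_zero_or_pos with rfl | hpos
    · simp
    · exact absurd (sub_eq_zero.1 hn).symm (hlam n hpos)
  obtain ⟨C, hC⟩ := (isBigO_nat_atTop_iff hzero).1 hequiv.symm.isBigO
  refine ⟨C, fun n hn => ?_⟩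
  have hD : 0 < ‖(n : ℂ) - lam‖ := norm_pos_iff.2 (sub_ne_zero.2 (hlam n hn).symm)
  have hn' : (0 : ℝ) < n := Nat.cast_pos.2 hn
  rw [norm_inv, ← div_eq_mul_inv, le_div_iff₀ hn', inv_mul_le_iff₀ hD]
  simpa [mul_comm] using hC n

theorem norm_prod_one_div_natCast_pow_le {ι : Type*} [Fintype ι] (n k : ι → ℕ) {i₀ : ι}
    (hk : 1 ≤ k i₀) : ‖∏ i, 1 / (n i : ℂ) ^ k i‖ ≤ (n i₀ : ℝ)⁻¹ := by
  classical
  have hx₀ (i : ι) : 0 ≤ (n i : ℝ)⁻¹ := by positivity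
  have hx₁ (i : ι) : (n i : ℝ)⁻¹ ≤ 1 := Nat.cast_inv_le_one (n i)
  calc ‖∏ i, 1 / (n i : ℂ) ^ k i‖ = ∏ i, (n i : ℝ)⁻¹ ^ k i := by simp [norm_prod]
    _ = (n i₀ : ℝ)⁻¹ ^ k i₀ * ∏ i ∈ univ.erase i₀, (n i : ℝ)⁻¹ ^ k i :=
        (mul_prod_erase _ _ (mem_univ i₀)).symm
    _ ≤ (n i₀ : ℝ)⁻¹ ^ 1 * 1 :=
        mul_le_mul (pow_le_pow_of_le_one (hx₀ i₀) (hx₁ i₀) hk)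
          (prod_le_one (fun i _ => pow_nonneg (hx₀ i) _) fun i _ => pow_le_one₀ (hx₀ i) (hx₁ i))
          (prod_nonneg fun i _ => pow_nonneg (hx₀ i) _) (pow_nonneg (hx₀ i₀) _)
    _ = (n i₀ : ℝ)⁻¹ := by ring

theorem inv_mul_inv_mul_prod_inv_le_rpow {ι : Type*} (E : Finset ι) (v : ι → ℝ) {a N p : ℝ}
    (ha : 0 < a) (haN : a ≤ N) (hv : ∀ i ∈ E, 0 < v i ∧ v i ≤ N) (hp : (#E + 1) * p = 1) :
    N⁻¹ * a⁻¹ * ∏ i ∈ E, (v i)⁻¹ ≤ a ^ (-(1 + p)) * ∏ i ∈ E, v i ^ (-(1 + p)) := by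
  have hN : 0 < N := ha.trans_le haN
  have hp₀ : 0 ≤ p := by
    by_contra! h
    nlinarith [Nat.cast_nonneg (α := ℝ) #E]
  have hvi : ∀ i ∈ E, (v i)⁻¹ ≤ N ^ p * v i ^ (-(1 + p)) := fun i hi => by
    obtain ⟨hv₀, hvN⟩ := hv i hi
    calc (v i)⁻¹ = v i ^ p * v i ^ (-(1 + p)) := by
          rw [← Real.rpow_add hv₀, ← Real.rpow_neg_one]; ring_nf
      _ ≤ N ^ p * v i ^ (-(1 + p)) := by gcongr
  calc N⁻¹ * a⁻¹ * ∏ i ∈ E, (v i)⁻¹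
      ≤ N⁻¹ * a⁻¹ * ∏ i ∈ E, (N ^ p * v i ^ (-(1 + p))) := by
        gcongr with i hi
        · exact fun i hi => (inv_pos.2 (hv i hi).1).le
        · exact hvi i hi
    _ = N ^ (-p) * a⁻¹ * ∏ i ∈ E, v i ^ (-(1 + p)) := by
        rw [prod_mul_distrib, prod_const, ← Real.rpow_mul_natCast hN.le, ← Real.rpow_neg_one,
          ← Real.rpow_neg_one, show -p = -1 + p * #E by linear_combination -hp]
        rw [Real.rpow_add hN]; ring
    _ ≤ a ^ (-p) * a⁻¹ * ∏ i ∈ E, v i ^ (-(1 + p)) := by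
        gcongr ?_ * _ * _
        · exact prod_nonneg fun i hi => Real.rpow_nonneg (hv i hi).1.le _
        · exact Real.rpow_le_rpow_of_nonpos ha haN (by linarith)
    _ = a ^ (-(1 + p)) * ∏ i ∈ E, v i ^ (-(1 + p)) := by
        rw [← Real.rpow_neg_one a, ← Real.rpow_add ha]; ring_nf

namespace DecSeq

variable {L : ℕ} (t : DecSeq L) {i j : ℕ}

theorem apply_lt_apply (hij : i < j) (hj : j < L) : t.1 j < t.1 i := t.2.1 i j hij hj

theorem apply_le_apply (hij : i ≤ j) (hj : j < L) : t.1 j ≤ t.1 i := by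
  rcases hij.lt_or_eq with hij | rfl
  exacts [(t.apply_lt_apply hij hj).le, le_rfl]

theorem apply_pos (hi : i < L) : 0 < t.1 i := t.2.2.1 i hi

theorem apply_eq_zero_of_le (hi : L ≤ i) : t.1 i = 0 := t.2.2.2 i hi

def gap (j i : ℕ) : ℕ := if i < j then t.1 i - t.1 j else t.1 j - t.1 i

theorem norm_sub_eq_gap (hi : i < L) (hj : j < L) : ‖(t.1 i : ℂ) - t.1 j‖ = t.gap j i := by
  unfold gap
  split_ifs with hij
  · rw [← Nat.cast_sub (t.apply_lt_apply hij hj).le, Complex.norm_natCast]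
  · rw [norm_sub_rev, ← Nat.cast_sub (t.apply_le_apply (not_lt.1 hij) hi), Complex.norm_natCast]

theorem gap_pos (hi : i < L) (hj : j < L) (hij : i ≠ j) : 0 < t.gap j i := by
  unfold gap
  rcases hij.lt_or_gt with hij | hij
  · simpa [hij] using t.apply_lt_apply hij hj
  · simpa [hij.not_gt] using t.apply_lt_apply hij hi

theorem gap_le_apply_zero (hi : i < L) (hj : j < L) : t.gap j i ≤ t.1 0 := by
  unfold gap
  split_ifs
  · exact (Nat.sub_le _ _).trans (t.apply_le_apply (Nat.zero_le i) hi)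
  · exact (Nat.sub_le _ _).trans (t.apply_le_apply (Nat.zero_le j) hj)

def shape (j : ℕ) (i : Fin L) : ℕ := if (i : ℕ) = j then t.1 j else t.gap j i

theorem shape_injective (hj : j < L) : Function.Injective fun t : DecSeq L => t.shape j := by
  intro t s hts
  have hj' : t.1 j = s.1 j := by simpa [shape] using congrFun hts ⟨j, hj⟩
  refine Subtype.ext <| funext fun i => ?_
  rcases lt_or_ge i L with hi | hi
  · have hgap := congrFun hts ⟨i, hi⟩
    simp only [shape, gap] at hgap
    rcases lt_trichotomy i j with hij | rfl | hij
    · simp only [hij.ne, hij, if_false, if_true] at hgap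
      have := t.apply_lt_apply hij hj
      have := s.apply_lt_apply hij hj
      omega
    · exact hj'
    · simp only [hij.ne', hij.not_gt, if_false] at hgap
      have := t.apply_lt_apply hij hi
      have := s.apply_lt_apply hij hi
      omega
  · rw [t.apply_eq_zero_of_le hi, s.apply_eq_zero_of_le hi]

theorem prod_shape {M : Type*} [CommMonoid M] (g : ℕ → M) (hj : j < L) :
    ∏ i, g (t.shape j i) = g (t.1 j) * ∏ i ∈ (range L).erase j, g (t.gap j i) := by
  calc ∏ i, g (t.shape j i) = ∏ i ∈ range L, g (if i = j then t.1 j else t.gap j i) :=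
        Fin.prod_univ_eq_prod_range (fun i => g (if i = j then t.1 j else t.gap j i)) L
    _ = _ := by
        rw [← mul_prod_erase _ _ (mem_range.2 hj), if_pos rfl]
        exact congrArg _ <| prod_congr rfl fun i hi => by rw [if_neg (ne_of_mem_erase hi)]

theorem norm_mul_prod_div_le (hj : j < L) {P lam : ℂ} {C : ℝ}
    (hP : ‖P‖ ≤ (t.1 0 : ℝ)⁻¹) (hC : ‖((t.1 j : ℂ) - lam)⁻¹‖ ≤ C * (t.1 j : ℝ)⁻¹) :
    ‖(P * ∏ i ∈ (range L).erase j, 1 / ((t.1 i : ℂ) - t.1 j)) / ((t.1 j : ℂ) - lam)‖ ≤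
      C * ∏ i, (t.shape j i : ℝ) ^ (-(1 + (L : ℝ)⁻¹)) := by
  set E := (range L).erase j
  have ha : (0 : ℝ) < t.1 j := Nat.cast_pos.2 (t.apply_pos hj)
  have haN : (t.1 j : ℝ) ≤ t.1 0 := Nat.cast_le.2 (t.apply_le_apply (Nat.zero_le j) hj)
  have hgap : ∀ i ∈ E, (0 : ℝ) < t.gap j i ∧ (t.gap j i : ℝ) ≤ t.1 0 := fun i hi => by
    have hi' := mem_range.1 (mem_of_mem_erase hi)
    exact ⟨Nat.cast_pos.2 (t.gap_pos hi' hj (ne_of_mem_erase hi)),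
      Nat.cast_le.2 (t.gap_le_apply_zero hi' hj)⟩
  have hE : ((#E : ℕ) + 1 : ℝ) * (L : ℝ)⁻¹ = 1 := by
    rw [card_erase_of_mem (mem_range.2 hj), card_range, Nat.cast_sub (by omega : 1 ≤ L),
      Nat.cast_one, sub_add_cancel, mul_inv_cancel₀ (Nat.cast_ne_zero.2 (by omega))]
  have hC₀ : 0 ≤ C := nonneg_of_mul_nonneg_left ((norm_nonneg _).trans hC) (inv_pos.2 ha)
  calc ‖(P * ∏ i ∈ E, 1 / ((t.1 i : ℂ) - t.1 j)) / ((t.1 j : ℂ) - lam)‖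
      = ‖P‖ * (∏ i ∈ E, (t.gap j i : ℝ)⁻¹) * ‖((t.1 j : ℂ) - lam)⁻¹‖ := by
        rw [div_eq_mul_inv, norm_mul, norm_mul, norm_prod]
        congr 2
        exact prod_congr rfl fun i hi => by
          rw [norm_div, norm_one, t.norm_sub_eq_gap (mem_range.1 (mem_of_mem_erase hi)) hj,
            one_div]
    _ ≤ (t.1 0 : ℝ)⁻¹ * (∏ i ∈ E, (t.gap j i : ℝ)⁻¹) * (C * (t.1 j : ℝ)⁻¹) := by
        gcongr
    _ = C * ((t.1 0 : ℝ)⁻¹ * (t.1 j : ℝ)⁻¹ * ∏ i ∈ E, (t.gap j i : ℝ)⁻¹) := by ring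
    _ ≤ C * ((t.1 j : ℝ) ^ (-(1 + (L : ℝ)⁻¹)) * ∏ i ∈ E, (t.gap j i : ℝ) ^ (-(1 + (L : ℝ)⁻¹))) :=
        mul_le_mul_of_nonneg_left
          (inv_mul_inv_mul_prod_inv_le_rpow E (fun i => (t.gap j i : ℝ)) ha haN hgap hE) hC₀
    _ = C * ∏ i, (t.shape j i : ℝ) ^ (-(1 + (L : ℝ)⁻¹)) :=
        congrArg (C * ·) (t.prod_shape (fun x : ℕ => (x : ℝ) ^ (-(1 + (L : ℝ)⁻¹))) hj).symm

end DecSeq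

theorem Lpart_mk_zero {m : ℕ} (l : Fin m → ℕ) (hm : 0 < m) : Lpart m l ⟨0, hm⟩ = 0 :=
  sum_eq_zero fun i _ => if_neg (Nat.not_lt_zero i)

/-- For each flat position `j`, the family `C_{n_j}^{n₁…n_L}/(n_j - λ)` is absolutely
summable over strictly decreasing tuples `n₁ > ⋯ > n_L > 0`, where
`C_{n_j}^{n₁…n_L} = (∏ᵢ 1/n_{L_{i-1}+1}^{kᵢ}) ∏_{i ≠ j} 1/(nᵢ - n_j)`. -/
theorem coeff_summable (m : ℕ) (hm : 1 ≤ m) (k l : Fin m → ℕ)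
    (hk : 1 ≤ k ⟨0, hm⟩)
    (lam : ℂ) (hlam : ∀ n : ℕ, 0 < n → lam ≠ (n : ℂ))
    (j : ℕ) (hj : j < ∑ i, l i) :
    Summable fun t : DecSeq (∑ i, l i) =>
      ‖((∏ i : Fin m, 1 / ((t.1 (Lpart m l i) : ℂ)) ^ k i) *
            ∏ i ∈ (Finset.range (∑ i, l i)).erase j, 1 / ((t.1 i : ℂ) - (t.1 j : ℂ))) /
          ((t.1 j : ℂ) - lam)‖ := by
  obtain ⟨C, hC⟩ := exists_norm_inv_natCast_sub_le_mul_inv hlam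
  have hw : Summable fun x : ℕ => (x : ℝ) ^ (-(1 + ((∑ i, l i : ℕ) : ℝ)⁻¹)) := by
    have : (0 : ℝ) < ((∑ i, l i : ℕ) : ℝ)⁻¹ := inv_pos.2 (Nat.cast_pos.2 (by omega))
    exact Real.summable_nat_rpow.2 (by linarith)
  refine .of_nonneg_of_le (fun t => norm_nonneg _) (fun t => ?_)
    (((summable_prod_apply_of_nonneg (fun _ _ => by positivity) fun _ => hw).comp_injective
      (DecSeq.shape_injective hj)).mul_left C)
  refine t.norm_mul_prod_div_le hj ?_ (hC _ (t.apply_pos hj))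
  have hP := norm_prod_one_div_natCast_pow_le (fun i => t.1 (Lpart m l i)) k hk
  rwa [Lpart_mk_zero] at hP
end

section
/- Let m ≥ 1 and let k_1,…,k_m, l_1,…,l_m be integers with k_1 = 1, l_i ≥ 1 and k_i ≥ 1 for all i, and assume that it is not the case that m = 1 and l_1 = 1. Let λ ∈ ℂ be not a positive integer and set λ′ = λ − 1. Then λ·[{n^1, l_1, n^{k_2}, l_2, …, n^{k_m}, l_m}; λ] − [{n^1, l_1−1, n^{k_2}, l_2, …, n^{k_m}, l_m}; λ] = λ′·[{(n−1)^1, l_1, n^{k_2}, l_2, …, n^{k_m}, l_m}; λ], where all brackets are evaluated at the same λ and only the shift of the first block differs. -/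
/-- The bracket series
`[{(n-aᵢ)^{kᵢ}, lᵢ}ᵢ; λ] = Σ_{n₁ > ⋯ > n_{L_m} > 0}
  ∏ᵢ [ 1/(n_{L_{i-1}+1} - aᵢ)^{kᵢ} ∏_j 1/(n_j - λ) ]`;
the bracket with all shifts `aᵢ = 0` is the generating function `f({kᵢ,lᵢ}ᵢ; λ)`. -/
noncomputable def brak (m : ℕ) (a k l : Fin m → ℕ) (lam : ℂ) : ℂ :=
  ∑' n : DecSeq (∑ j, l j),
    ∏ i : Fin m,
      (1 / ((n.1 (Lpart m l i) : ℂ) - (a i : ℂ)) ^ k i *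
        ∏ j ∈ Finset.Ico (Lpart m l i) (Lpart m l i + l i), 1 / ((n.1 j : ℂ) - lam))

open Finset Filter Topology

namespace DecSeq

instance : Subsingleton (DecSeq 0) :=
  ⟨fun a b => Subtype.ext <| funext fun i => by rw [a.2.2.2 i i.zero_le, b.2.2.2 i i.zero_le]⟩

variable {L : ℕ}

lemma pos (n : DecSeq L) {j : ℕ} (hj : j < L) : 0 < n.1 j := n.2.2.1 j hj

lemma le_head (n : DecSeq L) (j : ℕ) : n.1 j ≤ n.1 0 := by
  rcases j.eq_zero_or_pos with rfl | hj
  · exact le_rfl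
  by_cases hjL : j < L
  · exact (n.2.1 0 j hj hjL).le
  · rw [n.2.2.2 j (not_lt.1 hjL)]
    exact Nat.zero_le _

/-- The new head is given by its gap `i` above `t 0`, so that `consEquiv` is a plain product. -/
def cons (t : DecSeq L) (i : ℕ) : DecSeq (L + 1) :=
  ⟨fun | 0 => t.1 0 + i + 1 | j + 1 => t.1 j,
   fun
    | 0, j + 1, _, _ => Nat.lt_succ_of_le ((t.le_head j).trans (Nat.le_add_right _ _))
    | i + 1, j + 1, hij, hj => t.2.1 i j (by omega) (by omega),
   fun
    | 0, _ => Nat.succ_pos _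
    | j + 1, hj => t.pos (by omega),
   fun
    | 0, h => absurd h (by omega)
    | j + 1, h => t.2.2.2 j (by omega)⟩

@[simp] lemma cons_zero (t : DecSeq L) (i : ℕ) : (cons t i).1 0 = t.1 0 + i + 1 := rfl

@[simp] lemma cons_succ (t : DecSeq L) (i j : ℕ) : (cons t i).1 (j + 1) = t.1 j := rfl

def tail (n : DecSeq (L + 1)) : DecSeq L :=
  ⟨fun j => n.1 (j + 1), fun i j hij hj => n.2.1 (i + 1) (j + 1) (by omega) (by omega),
   fun i hi => n.pos (by omega), fun i hi => n.2.2.2 (i + 1) (by omega)⟩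

lemma tail_head_lt (n : DecSeq (L + 1)) : (tail n).1 0 < n.1 0 := by
  rcases L.eq_zero_or_pos with rfl | hL
  · exact (n.2.2.2 1 le_rfl).symm ▸ n.pos (Nat.succ_pos 0)
  · exact n.2.1 0 1 one_pos (by omega)

def consEquiv : DecSeq L × ℕ ≃ DecSeq (L + 1) where
  toFun p := cons p.1 p.2
  invFun n := (tail n, n.1 0 - (tail n).1 0 - 1)
  left_inv p := Prod.ext rfl (show p.1.1 0 + p.2 + 1 - p.1.1 0 - 1 = p.2 by omega)
  right_inv n := Subtype.ext <| funext fun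
    | 0 => show n.1 1 + (n.1 0 - n.1 1 - 1) + 1 = n.1 0 by
        have : n.1 1 < n.1 0 := tail_head_lt n
        omega
    | _ + 1 => rfl

@[simp] lemma consEquiv_apply (p : DecSeq L × ℕ) : consEquiv p = cons p.1 p.2 := rfl

lemma tsum_eq_tsum_tsum_cons {E : Type*} [NormedAddCommGroup E] [CompleteSpace E]
    {f : DecSeq (L + 1) → E} (hf : Summable f) : ∑' n, f n = ∑' (t) (i), f (cons t i) := by
  rw [← consEquiv.tsum_eq]
  exact (consEquiv.summable_iff.2 hf).tsum_prod

end DecSeq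

lemma hasSum_sub_succ_of_antitone {d : ℕ → ℝ} (hd : Antitone d) (h : Tendsto d atTop (𝓝 0)) :
    HasSum (fun i => d i - d (i + 1)) (d 0) := by
  rw [hasSum_iff_tendsto_nat_of_nonneg (fun i => sub_nonneg.2 (hd i.le_succ))]
  simp_rw [sum_range_sub']
  simpa using tendsto_const_nhds.sub h

lemma hasSum_inv_add_sub_inv_add_succ {N : ℕ} (hN : 0 < N) :
    HasSum (fun i : ℕ => ((N : ℝ) + i)⁻¹ - ((N : ℝ) + i + 1)⁻¹) (N : ℝ)⁻¹ := by
  have hpos : ∀ i : ℕ, (0 : ℝ) < N + i := fun i => by positivity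
  have hd : Antitone fun i : ℕ => ((N : ℝ) + i)⁻¹ := fun i j hij =>
    inv_anti₀ (hpos i) (by gcongr)
  have hlim : Tendsto (fun i : ℕ => ((N : ℝ) + i)⁻¹) atTop (𝓝 0) :=
    tendsto_inv_atTop_zero.comp (tendsto_atTop_add_const_left _ _ tendsto_natCast_atTop_atTop)
  simpa [add_assoc] using hasSum_sub_succ_of_antitone hd hlim

lemma hasSum_inv_add_sub_inv_add_succ_complex {N : ℕ} (hN : 0 < N) :
    HasSum (fun i : ℕ => ((N : ℂ) + i)⁻¹ - ((N : ℂ) + i + 1)⁻¹) (N : ℂ)⁻¹ := by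
  have h := Complex.hasSum_ofReal.2 (hasSum_inv_add_sub_inv_add_succ hN)
  push_cast at h
  exact h

lemma summable_inv_add_succ_sq (N : ℕ) : Summable (fun i : ℕ => ((N : ℝ) + i + 1)⁻¹ ^ 2) := by
  have := (summable_nat_add_iff (N + 1)).2 (Real.summable_nat_pow_inv.2 one_lt_two)
  exact this.congr fun i => by rw [inv_pow]; push_cast; ring

lemma tsum_inv_add_succ_sq_le {N : ℕ} (hN : 0 < N) :
    ∑' i : ℕ, ((N : ℝ) + i + 1)⁻¹ ^ 2 ≤ (N : ℝ)⁻¹ := by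
  refine hasSum_le (fun i => ?_) (summable_inv_add_succ_sq N).hasSum
    (hasSum_inv_add_sub_inv_add_succ hN)
  have hx : (0 : ℝ) < N + i := by positivity
  rw [inv_sub_inv hx.ne' (by positivity), inv_pow, ← one_div]
  gcongr <;> nlinarith

namespace DecSeq

theorem summable_inv_head_mul_prod_inv (L : ℕ) :
    Summable fun n : DecSeq L => (n.1 0 : ℝ)⁻¹ * ∏ j ∈ range L, (n.1 j : ℝ)⁻¹ := by
  induction L with
  | zero => exact Summable.of_finite
  | succ L ih =>
    rw [← consEquiv.summable_iff]
    have hcons : ∀ p : DecSeq L × ℕ,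
        ((consEquiv p).1 0 : ℝ)⁻¹ * ∏ j ∈ range (L + 1), ((consEquiv p).1 j : ℝ)⁻¹
          = ((p.1.1 0 : ℝ) + p.2 + 1)⁻¹ ^ 2 * ∏ j ∈ range L, (p.1.1 j : ℝ)⁻¹ := by
      rintro ⟨t, i⟩
      simp only [consEquiv_apply, cons_zero, cons_succ, prod_range_succ']
      push_cast
      ring
    simp only [Function.comp_def, hcons]
    rw [summable_prod_of_nonneg fun _ => by positivity]
    dsimp only
    refine ⟨fun t => ?_, ?_⟩
    · exact (summable_inv_add_succ_sq (t.1 0)).mul_right _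
    rcases L.eq_zero_or_pos with rfl | hL
    · exact Summable.of_finite
    refine Summable.of_nonneg_of_le (fun t => tsum_nonneg fun _ => by positivity) (fun t => ?_) ih
    rw [tsum_mul_right]
    exact mul_le_mul_of_nonneg_right (tsum_inv_add_succ_sq_le (t.pos hL)) (by positivity)

end DecSeq

lemma Lpart_zero {m : ℕ} (l : Fin (m + 1) → ℕ) : Lpart (m + 1) l 0 = 0 :=
  sum_eq_zero fun j _ => if_neg (Fin.not_lt_zero j)

lemma Lpart_succ {m : ℕ} (l : Fin (m + 1) → ℕ) (i : Fin m) :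
    Lpart (m + 1) l i.succ = l 0 + Lpart m (Fin.tail l) i := by
  simp [Lpart, Fin.sum_univ_succ, Fin.tail]

lemma prod_Ico_Lpart {M : Type*} [CommMonoid M] (m : ℕ) (l : Fin m → ℕ) (f : ℕ → M) :
    ∏ i, ∏ j ∈ Ico (Lpart m l i) (Lpart m l i + l i), f j = ∏ j ∈ range (∑ i, l i), f j := by
  induction m generalizing f with
  | zero => simp
  | succ m ih =>
    rw [Fin.prod_univ_succ, Fin.sum_univ_succ, prod_range_add, Lpart_zero, zero_add,
      ← Nat.Ico_zero_eq_range]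
    congr 1
    refine (prod_congr rfl fun i _ => ?_).trans (ih (Fin.tail l) fun j => f (l 0 + j))
    rw [Lpart_succ, prod_Ico_add, add_comm (l 0), add_right_comm]
    rfl

noncomputable def bracketTerm (m : ℕ) (a k l : Fin m → ℕ) (lam : ℂ) (n : ℕ → ℕ) : ℂ :=
  ∏ i : Fin m,
    (1 / ((n (Lpart m l i) : ℂ) - (a i : ℂ)) ^ k i *
      ∏ j ∈ Ico (Lpart m l i) (Lpart m l i + l i), 1 / ((n j : ℂ) - lam))

lemma brak_eq_tsum {m L : ℕ} (a k l : Fin m → ℕ) (lam : ℂ) (hL : ∑ j, l j = L) :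
    brak m a k l lam = ∑' n : DecSeq L, bracketTerm m a k l lam n.1 := by
  subst hL
  rfl

lemma bracketTerm_eq_prod_mul_prod (m : ℕ) (a k l : Fin m → ℕ) (lam : ℂ) (n : ℕ → ℕ) :
    bracketTerm m a k l lam n = (∏ i, 1 / ((n (Lpart m l i) : ℂ) - a i) ^ k i)
      * ∏ j ∈ range (∑ i, l i), 1 / ((n j : ℂ) - lam) := by
  rw [bracketTerm, prod_mul_distrib, prod_Ico_Lpart]

section Blocks

variable {m : ℕ} {a k l l' : Fin (m + 1) → ℕ} {lam : ℂ}

lemma bracketTerm_eq_pow_mul (k : Fin (m + 1) → ℕ) (n : ℕ → ℕ) :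
    bracketTerm (m + 1) (fun _ => 0) k l lam n
      = 1 / (n 0 : ℂ) ^ k 0 * bracketTerm (m + 1) (fun _ => 0) (Function.update k 0 0) l lam n := by
  simp only [bracketTerm, Fin.prod_univ_succ, Lpart_zero, Function.update_self,
    Function.update_of_ne (Fin.succ_ne_zero _), pow_zero, div_one, one_mul, Nat.cast_zero, sub_zero]
  ring

lemma sum_eq_sum_add_one (hl0 : l 0 = l' 0 + 1) (hl : ∀ i : Fin m, l i.succ = l' i.succ) :
    ∑ i, l i = ∑ i, l' i + 1 := by
  simp only [Fin.sum_univ_succ, hl0, hl]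
  ring

/-- The last factor is the `R(t)` of the header: the first block of `t` carries no head power. -/
lemma bracketTerm_eq_mul_bracketTerm_tail (hl0 : l 0 = l' 0 + 1)
    (hl : ∀ i : Fin m, l i.succ = l' i.succ) (ha : ∀ i : Fin m, a i.succ = 0) {n t : ℕ → ℕ}
    (hnt : ∀ j, n (j + 1) = t j) :
    bracketTerm (m + 1) a k l lam n = 1 / ((n 0 : ℂ) - a 0) ^ k 0 * (1 / ((n 0 : ℂ) - lam))
      * bracketTerm (m + 1) (fun _ => 0) (Function.update k 0 0) l' lam t := by
  have htail : Fin.tail l = Fin.tail l' := funext hl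
  have hLpart (i : Fin m) : Lpart (m + 1) l i.succ = Lpart (m + 1) l' i.succ + 1 := by
    rw [Lpart_succ, Lpart_succ, htail, hl0]
    ring
  rw [bracketTerm_eq_prod_mul_prod, bracketTerm_eq_prod_mul_prod, sum_eq_sum_add_one hl0 hl,
    prod_range_succ', Fin.prod_univ_succ, Fin.prod_univ_succ]
  simp only [Lpart_zero, hLpart, hnt, ha, Function.update_self,
    Function.update_of_ne (Fin.succ_ne_zero _), pow_zero, div_one, one_mul, Nat.cast_zero, sub_zero]
  ring

end Blocks

lemma exists_norm_one_div_natCast_sub_le (lam : ℂ) :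
    ∃ c : ℝ, ∀ x : ℕ, 0 < x → ‖1 / ((x : ℂ) - lam)‖ ≤ c * (x : ℝ)⁻¹ := by
  obtain ⟨c, hc⟩ := isBounded_iff_forall_norm_le.1
    (Metric.isBounded_range_of_tendsto _ (tendsto_natCast_div_add_atTop (-lam)))
  refine ⟨c, fun x hx => ?_⟩
  have hbound : ‖(x : ℂ) / (x - lam)‖ ≤ c := by simpa [sub_eq_add_neg] using hc _ ⟨x, rfl⟩
  rw [norm_div, Complex.norm_natCast] at hbound
  have hx' : (0 : ℝ) < x := by exact_mod_cast hx
  calc ‖1 / ((x : ℂ) - lam)‖ = (x : ℝ) / ‖(x : ℂ) - lam‖ * (x : ℝ)⁻¹ := by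
        rw [one_div, norm_inv, div_eq_mul_inv, mul_comm (x : ℝ), mul_assoc,
          mul_inv_cancel₀ hx'.ne', mul_one]
    _ ≤ c * (x : ℝ)⁻¹ := by gcongr

lemma norm_one_div_natCast_sub_pow_le {x a k : ℕ} (hx : 0 < x) (ha : a ≤ 1) (hk : k ≠ 0) :
    ‖1 / ((x : ℂ) - a) ^ k‖ ≤ 2 * (x : ℝ)⁻¹ := by
  rw [← Nat.cast_sub (by omega), norm_div, norm_one, norm_pow, Complex.norm_natCast, one_div,
    ← inv_pow]
  rcases (x - a).eq_zero_or_pos with hxa | hxa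
  · simp [hxa, hk]
  have hxa' : (1 : ℝ) ≤ (x - a : ℕ) := by exact_mod_cast hxa
  calc ((x - a : ℕ) : ℝ)⁻¹ ^ k ≤ ((x - a : ℕ) : ℝ)⁻¹ :=
        pow_le_of_le_one (by positivity) (inv_le_one_of_one_le₀ hxa') hk
    _ ≤ 2 * (x : ℝ)⁻¹ := by
        rw [← div_eq_mul_inv, le_div_iff₀ (by positivity), ← div_eq_inv_mul,
          div_le_iff₀ (by positivity)]
        exact_mod_cast (by omega : x ≤ 2 * (x - a))

lemma norm_one_div_natCast_pow_le_one (x k : ℕ) : ‖1 / (x : ℂ) ^ k‖ ≤ 1 := by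
  rw [norm_div, norm_one, norm_pow, Complex.norm_natCast, one_div, ← inv_pow]
  exact pow_le_one₀ (by positivity) (Nat.cast_inv_le_one x)

section

variable {m L : ℕ} {a k l : Fin (m + 1) → ℕ}

lemma norm_bracketTerm_le (hk0 : k 0 ≠ 0) (ha0 : a 0 ≤ 1) (ha : ∀ i : Fin m, a i.succ = 0)
    {lam : ℂ} {c : ℝ} (hc : ∀ x : ℕ, 0 < x → ‖1 / ((x : ℂ) - lam)‖ ≤ c * (x : ℝ)⁻¹)
    (hL : ∑ j, l j = L) (hL0 : 0 < L) (n : DecSeq L) :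
    ‖bracketTerm (m + 1) a k l lam n.1‖
      ≤ 2 * c ^ L * ((n.1 0 : ℝ)⁻¹ * ∏ j ∈ range L, (n.1 j : ℝ)⁻¹) := by
  have hheads : ‖∏ i, 1 / ((n.1 (Lpart (m + 1) l i) : ℂ) - a i) ^ k i‖ ≤ 2 * (n.1 0 : ℝ)⁻¹ := by
    rw [Fin.prod_univ_succ, norm_mul, Lpart_zero, ← mul_one (2 * _)]
    refine mul_le_mul (norm_one_div_natCast_sub_pow_le (n.pos hL0) ha0 hk0) ?_ (norm_nonneg _)
      (by positivity)
    rw [norm_prod]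
    exact prod_le_one (fun _ _ => norm_nonneg _) fun i _ => by
      simpa [ha i] using norm_one_div_natCast_pow_le_one (n.1 (Lpart (m + 1) l i.succ)) (k i.succ)
  have hblocks :
      ‖∏ j ∈ range L, 1 / ((n.1 j : ℂ) - lam)‖ ≤ c ^ L * ∏ j ∈ range L, (n.1 j : ℝ)⁻¹ := by
    rw [norm_prod]
    calc _ ≤ ∏ j ∈ range L, c * (n.1 j : ℝ)⁻¹ :=
          prod_le_prod (fun _ _ => norm_nonneg _) fun j hj => hc _ (n.pos (mem_range.1 hj))
      _ = _ := by rw [prod_mul_distrib, prod_const, card_range]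
  rw [bracketTerm_eq_prod_mul_prod, hL, norm_mul]
  calc _ ≤ (2 * (n.1 0 : ℝ)⁻¹) * (c ^ L * ∏ j ∈ range L, (n.1 j : ℝ)⁻¹) :=
        mul_le_mul hheads hblocks (norm_nonneg _) (by positivity)
    _ = _ := by ring

theorem summable_bracketTerm (hk0 : k 0 ≠ 0) (ha0 : a 0 ≤ 1) (ha : ∀ i : Fin m, a i.succ = 0)
    (lam : ℂ) (hL : ∑ j, l j = L) :
    Summable fun n : DecSeq L => bracketTerm (m + 1) a k l lam n.1 := by
  rcases L.eq_zero_or_pos with rfl | hL0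
  · exact Summable.of_finite
  obtain ⟨c, hc⟩ := exists_norm_one_div_natCast_sub_le lam
  exact .of_norm_bounded ((DecSeq.summable_inv_head_mul_prod_inv L).mul_left _)
    (norm_bracketTerm_le hk0 ha0 ha hc hL hL0)

lemma inv_sub_one_sub_inv_eq {K : Type*} [Field K] {x lam : K} (hx0 : x ≠ 0) (hx1 : x - 1 ≠ 0)
    (hlam : x - lam ≠ 0) :
    (x - 1)⁻¹ - x⁻¹ = lam * (x⁻¹ * (x - lam)⁻¹) - (lam - 1) * ((x - 1)⁻¹ * (x - lam)⁻¹) := by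
  field_simp
  ring

theorem hasSum_bracketTerm_cons (hk0 : k 0 = 1) (ha0 : a 0 = 1) (ha : ∀ i : Fin m, a i.succ = 0)
    {l' : Fin (m + 1) → ℕ} (hl0 : l 0 = l' 0 + 1) (hl : ∀ i : Fin m, l i.succ = l' i.succ)
    {lam : ℂ} (hlam : ∀ n : ℕ, 0 < n → lam ≠ n) (hL0 : 0 < L) (t : DecSeq L) :
    HasSum (fun i => lam * bracketTerm (m + 1) (fun _ => 0) k l lam (t.cons i).1
        - (lam - 1) * bracketTerm (m + 1) a k l lam (t.cons i).1)
      (bracketTerm (m + 1) (fun _ => 0) k l' lam t.1) := by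
  have hterm (i : ℕ) : lam * bracketTerm (m + 1) (fun _ => 0) k l lam (t.cons i).1
      - (lam - 1) * bracketTerm (m + 1) a k l lam (t.cons i).1
        = (((t.1 0 : ℂ) + i)⁻¹ - ((t.1 0 : ℂ) + i + 1)⁻¹)
          * bracketTerm (m + 1) (fun _ => 0) (Function.update k 0 0) l' lam t.1 := by
    rw [bracketTerm_eq_mul_bracketTerm_tail hl0 hl (fun _ => rfl) (t := t.1) (fun _ => rfl),
      bracketTerm_eq_mul_bracketTerm_tail hl0 hl ha (t := t.1) (fun _ => rfl)]
    have hx : ((t.cons i).1 0 : ℂ) = (t.1 0 : ℂ) + i + 1 := by simp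
    have hx0 : (t.1 0 : ℂ) + i + 1 ≠ 0 := by exact_mod_cast Nat.succ_ne_zero (t.1 0 + i)
    have hx1 : (t.1 0 : ℂ) + i + 1 - 1 ≠ 0 := by
      rw [add_sub_cancel_right]
      exact_mod_cast (Nat.add_pos_left (t.pos hL0) i).ne'
    have hxlam : (t.1 0 : ℂ) + i + 1 - lam ≠ 0 := by
      rw [sub_ne_zero]
      exact_mod_cast (hlam (t.1 0 + i + 1) (Nat.succ_pos _)).symm
    have key := inv_sub_one_sub_inv_eq hx0 hx1 hxlam
    rw [add_sub_cancel_right] at key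
    simp only [hx, hk0, ha0, pow_one, Nat.cast_zero, Nat.cast_one, sub_zero, one_div]
    rw [key]
    ring
  rw [bracketTerm_eq_pow_mul k, hk0, pow_one, one_div]
  simpa only [hterm] using (hasSum_inv_add_sub_inv_add_succ_complex (t.pos hL0)).mul_right _

end

theorem bracket_lemma_ib_general (m : ℕ) (hm : 1 ≤ m) (k l : Fin m → ℕ)
    (hl : ∀ i, 1 ≤ l i) (hk0 : k ⟨0, hm⟩ = 1)
    (hnot : ¬(m = 1 ∧ l ⟨0, hm⟩ = 1))
    (lam : ℂ) (hlam : ∀ n : ℕ, 0 < n → lam ≠ (n : ℂ)) :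
    lam * brak m (fun _ => 0) k l lam
        - brak m (fun _ => 0) k (fun i => if i.1 = 0 then l i - 1 else l i) lam
      = (lam - 1) * brak m (fun i => if i.1 = 0 then 1 else 0) k l lam := by
  obtain ⟨m, rfl⟩ : ∃ m', m = m' + 1 := ⟨m - 1, by omega⟩
  set l' : Fin (m + 1) → ℕ := fun i => if i.1 = 0 then l i - 1 else l i
  set a : Fin (m + 1) → ℕ := fun i => if i.1 = 0 then 1 else 0
  have hk0 : k 0 = 1 := hk0
  have hl0 : l 0 = l' 0 + 1 := by rw [show l' 0 = l 0 - 1 from if_pos rfl]; have := hl 0; omega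
  have hsucc (i : Fin m) : l i.succ = l' i.succ := by simp [l']
  have ha (i : Fin m) : a i.succ = 0 := by simp [a]
  have hL0 : 0 < ∑ j, l' j := by
    rcases m with _ | m
    · have : l 0 ≠ 1 := fun h => hnot ⟨rfl, h⟩
      have := hl 0
      rw [Fin.sum_univ_one]
      omega
    · calc 0 < l' (Fin.succ 0) := hsucc 0 ▸ hl _
        _ ≤ ∑ j, l' j := single_le_sum (fun _ _ => Nat.zero_le _) (mem_univ _)
  have hL := sum_eq_sum_add_one hl0 hsucc
  have hk0' : k 0 ≠ 0 := by omega
  have hA := summable_bracketTerm (a := fun _ => 0) hk0' (Nat.zero_le 1) (fun _ => rfl) lam hL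
  have hC := summable_bracketTerm (a := a) hk0' (by simp [a]) ha lam hL
  suffices h : lam * brak (m + 1) (fun _ => 0) k l lam - (lam - 1) * brak (m + 1) a k l lam
      = brak (m + 1) (fun _ => 0) k l' lam by linear_combination h
  rw [brak_eq_tsum _ _ _ _ hL, brak_eq_tsum _ _ _ _ hL, brak_eq_tsum _ _ _ _ rfl,
    ← tsum_mul_left, ← tsum_mul_left, ← (hA.mul_left lam).tsum_sub (hC.mul_left _),
    DecSeq.tsum_eq_tsum_tsum_cons ((hA.mul_left lam).sub (hC.mul_left _))]
  exact tsum_congr fun t =>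
    (hasSum_bracketTerm_cons hk0 (by simp [a]) ha hl0 hsucc hlam hL0 t).tsum_eq

/-- Lemma (i)(b): for `k₁ = 1` (and not `m = 1, l₁ = 1`),
`λ[{n^1,l₁,…};λ] - [{n^1,l₁-1,…};λ] = λ'[{(n-1)^1,l₁,…};λ]`. -/
theorem bracket_lemma_ib (m : ℕ) (hm : 1 ≤ m) (k l : Fin m → ℕ)
    (hk : ∀ i, 1 ≤ k i) (hl : ∀ i, 1 ≤ l i) (hk0 : k ⟨0, hm⟩ = 1)
    (hnot : ¬(m = 1 ∧ l ⟨0, hm⟩ = 1))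
    (lam : ℂ) (hlam : ∀ n : ℕ, 0 < n → lam ≠ (n : ℂ)) :
    lam * brak m (fun _ => 0) k l lam
        - brak m (fun _ => 0) k (fun i => if i.1 = 0 then l i - 1 else l i) lam
      = (lam - 1) * brak m (fun i => if i.1 = 0 then 1 else 0) k l lam :=
  bracket_lemma_ib_general m hm k l hl hk0 hnot lam hlam
end
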